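/- Let x be a nonzero element of a field with x ≠ ±1, set c = x (playing the role of cos γ). Define M_{n;k,l} via the polynomials P as M_{n;k,l} = a·P_{n,k+1,l}(c) + b·P_{n,k+1,l-1}(c) for arbitrary fixed field constants a, b. Then the recurrence M_{n+1;k+1,l} − c·M_{n;k,l-1} = c·M_{n;k,l} holds for all integers n ≥ 1, 0 ≤ k ≤ n-1, 0 ≤ l ≤ n+1, with M_{n;k,l-1} interpreted as 0 when l = 0. -/

import Mathlib

/-- Binomial coefficient C(a,b) for integer arguments, with the convention
    C(a,b) = 0 when b < 0 or b > a. -/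
def intChoose (a b : ℤ) : ℤ :=
  if 0 ≤ b ∧ b ≤ a then (a.toNat.choose b.toNat : ℤ) else 0

/-- P_{n,k,l}(x) = ∑_{s=0}^{l} (-1)^s C(n-k,s) C(n-s-1,l-s) x^{n-2s}, as a function of
    an (invertible) field element x; for l < 0 all terms vanish (the sum degenerates to
    the single s = 0 term containing C(n-1,l) = 0), so P_{n,k,l} = 0 for l < 0. -/
def Ppoly {K : Type*} [Field K] (x : K) (n k l : ℤ) : K :=
  ∑ s ∈ Finset.range (l.toNat + 1),
    (-1 : K) ^ s * (intChoose (n - k) (s : ℤ) : K) *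
      (intChoose (n - (s : ℤ) - 1) (l - (s : ℤ)) : K) * x ^ (n - 2 * (s : ℤ))

/-- M_{n;k,l} = a·P_{n,k+1,l}(x) + b·P_{n,k+1,l-1}(x) for fixed constants a, b. -/
def Mmat {K : Type*} [Field K] (x a b : K) (n k : ℕ) (l : ℤ) : K :=
  a * Ppoly x (n : ℤ) ((k : ℤ) + 1) l + b * Ppoly x (n : ℤ) ((k : ℤ) + 1) (l - 1)

/-!
Write `P_{n,k,l}(x)` as a sum over `s` and apply Pascal's rule to the second binomial
`C(n-s, l-s) = C(n-s-1, l-s) + C(n-s-1, l-s-1)` termwise; the first binomial `C(n-k, s)`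
is unchanged under `(n, k) ↦ (n+1, k+1)` and the power `x^{n+1-2s}` contributes the factor `x`.
This gives `P_{n+1,k+1,l}(x) = x (P_{n,k,l-1}(x) + P_{n,k,l}(x))` for `k > 0`, and the
recurrence for `M` is a linear combination of two instances of it.
-/

lemma intChoose_of_neg {a b : ℤ} (hb : b < 0) : intChoose a b = 0 := by
  simp [intChoose]; omega

lemma intChoose_of_lt {a b : ℤ} (h : a < b) : intChoose a b = 0 := by
  simp [intChoose]; omega

@[simp, norm_cast]
lemma intChoose_natCast (m j : ℕ) : intChoose m j = m.choose j := by
  by_cases h : j ≤ m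
  · simp [intChoose, h]
  · rw [intChoose_of_lt (by omega), Nat.choose_eq_zero_of_lt (by omega), Nat.cast_zero]

/-- Pascal's rule; the exceptional case `a = b = 0` is `C(0,0) = 1 ≠ C(-1,0) + C(-1,-1) = 0`. -/
lemma intChoose_eq_add {a b : ℤ} (h : ¬(a = 0 ∧ b = 0)) :
    intChoose a b = intChoose (a - 1) b + intChoose (a - 1) (b - 1) := by
  rcases lt_or_ge b 0 with hb | hb
  · simp [intChoose_of_neg, hb, show b - 1 < 0 by omega]
  rcases lt_or_ge a 1 with ha | ha
  · rw [intChoose_of_lt (by omega), intChoose_of_lt (by omega), intChoose_of_lt (by omega),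
      add_zero]
  obtain ⟨m, rfl⟩ : ∃ m : ℕ, a = m + 1 := ⟨(a - 1).toNat, by omega⟩
  obtain ⟨j, rfl⟩ : ∃ j : ℕ, b = j := ⟨b.toNat, by omega⟩
  rw [add_sub_cancel_right, show (m : ℤ) + 1 = ((m + 1 : ℕ) : ℤ) by push_cast; ring]
  rcases j with _ | j
  · rw [intChoose_of_neg (show ((0 : ℕ) : ℤ) - 1 < 0 by omega), add_zero]
    simp only [intChoose_natCast, Nat.choose_zero_right]
  · rw [show ((j + 1 : ℕ) : ℤ) - 1 = j by push_cast; ring]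
    simp only [intChoose_natCast]
    rw [Nat.choose_succ_succ', Nat.cast_add, add_comm]

section Ppoly

variable {K : Type*} [Field K] (x : K)

lemma Ppoly_eq_sum_range_of_le (n k l : ℤ) {m : ℕ} (hm : l.toNat ≤ m) :
    Ppoly x n k l = ∑ s ∈ Finset.range (m + 1),
      (-1 : K) ^ s * (intChoose (n - k) s : K) * (intChoose (n - s - 1) (l - s) : K) *
        x ^ (n - 2 * (s : ℤ)) := by
  refine Finset.sum_subset (Finset.range_subset_range.2 (by omega)) fun s _ hs => ?_
  rw [Finset.mem_range] at hs
  simp [intChoose_of_neg (show l - s < 0 by omega)]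

lemma Ppoly_succ_succ (hx : x ≠ 0) {n k : ℤ} (hk : 0 < k) (l : ℤ) :
    Ppoly x (n + 1) (k + 1) l = x * (Ppoly x n k (l - 1) + Ppoly x n k l) := by
  rw [Ppoly, Ppoly_eq_sum_range_of_le x n k (l - 1) (m := l.toNat) (by omega),
    Ppoly_eq_sum_range_of_le x n k l le_rfl, ← Finset.sum_add_distrib,
    Finset.mul_sum]
  refine Finset.sum_congr rfl fun s _ => ?_
  have hnk : n + 1 - (k + 1) = n - k := by ring
  have hns : n + 1 - s - 1 = n - s := by ring
  have hls : l - 1 - s = l - s - 1 := by ring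
  have hpow : x ^ (n + 1 - 2 * (s : ℤ)) = x * x ^ (n - 2 * (s : ℤ)) := by
    rw [← zpow_one_add₀ hx]; congr 1; ring
  rw [hnk, hns, hls, hpow]
  by_cases hex : n - s = 0 ∧ l - s = 0
  · -- Pascal fails here, but then `s = n > n - k`, so the first binomial vanishes
    simp [intChoose_of_lt (show n - k < s by omega)]
  · rw [intChoose_eq_add hex]
    push_cast
    ring

end Ppoly

lemma Mmat_succ_succ {K : Type*} [Field K] {x : K} (hx : x ≠ 0) (a b : K) (n k : ℕ) (l : ℤ) :
    Mmat x a b (n + 1) (k + 1) l = x * (Mmat x a b n k (l - 1) + Mmat x a b n k l) := by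
  have hP (m : ℤ) := Ppoly_succ_succ x hx (n := n) (k := k + 1) (by positivity) m
  simp only [Mmat, Nat.cast_add, Nat.cast_one, hP]
  ring

theorem Mmat_recurrence_one_general {K : Type*} [Field K] (x : K) (hx0 : x ≠ 0)
    (a b : K) (n k l : ℕ) :
    Mmat x a b (n + 1) (k + 1) (l : ℤ) - x * Mmat x a b n k ((l : ℤ) - 1)
      = x * Mmat x a b n k (l : ℤ) := by
  rw [Mmat_succ_succ hx0]
  ring

/-- The recurrence M_{n+1;k+1,l} − c·M_{n;k,l-1} = c·M_{n;k,l} (with c = x), for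
    n ≥ 1, 0 ≤ k ≤ n-1, 0 ≤ l ≤ n+1; for l = 0 the term M_{n;k,l-1} vanishes
    automatically since P_{n,k,l} = 0 for l < 0. -/
theorem Mmat_recurrence_one {K : Type*} [Field K] (x : K) (hx0 : x ≠ 0)
    (hx1 : x ≠ 1) (hx2 : x ≠ -1) (a b : K) (n k l : ℕ)
    (hn : 1 ≤ n) (hk : k ≤ n - 1) (hl : l ≤ n + 1) :
    Mmat x a b (n + 1) (k + 1) (l : ℤ) - x * Mmat x a b n k ((l : ℤ) - 1)
      = x * Mmat x a b n k (l : ℤ) :=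
  Mmat_recurrence_one_general x hx0 a b n k l
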